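/- The ℂ-linear map C¹ → z^{-1}ℂ[z^{-1}], F ↦ sing(∫₀¹F), is surjective and its kernel is exactly d(C⁰). Hence it induces a ℂ-linear isomorphism H¹(ℂ{{z}}) = C¹/d(C⁰) ≅ z^{-1}ℂ[z^{-1}], where z^{-1}ℂ[z^{-1}] denotes the space of Laurent series supported in strictly negative powers of z. -/

import Mathlib

/-!
On polynomials over a field of characteristic zero, `∫₀¹ F` is the value at `v = 1` of the
primitive of `F` vanishing at `v = 0`, and any primitive `f` of `F` satisfies
`∫₀¹ F = f(1) - f(0)`. So `F = f′` with `f(0), f(1) ∈ ℂ[[z]]` forces `∫₀¹ F ∈ ℂ[[z]]`, and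
conversely if `∫₀¹ F ∈ ℂ[[z]]` the primitive vanishing at `0` is such an `f`. Constant
polynomials give surjectivity.
-/

noncomputable section

open Polynomial

/-- Membership in `ℂ[[z]] ⊆ ℂ((z))`: all coefficients in strictly negative degrees vanish. -/
def inP (x : LaurentSeries ℂ) : Prop := ∀ n : ℤ, n < 0 → x.coeff n = 0

/-- Membership in `z⁻¹ℂ[z⁻¹] ⊆ ℂ((z))`: supported in strictly negative degrees. -/
def inQ (x : LaurentSeries ℂ) : Prop := ∀ n : ℤ, 0 ≤ n → x.coeff n = 0

/-- `∫₀¹ F` for `F = Σ_k F_k v^k`, namely `Σ_k F_k / (k+1)`. -/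
def intg (F : Polynomial (LaurentSeries ℂ)) : LaurentSeries ℂ :=
  ∑ k ∈ Finset.range (F.natDegree + 1), F.coeff k / ((k : LaurentSeries ℂ) + 1)

/-- The projection of a Laurent series onto its part supported in strictly
negative powers of `z`. -/
def sing (x : LaurentSeries ℂ) : LaurentSeries ℂ :=
  ⟨fun n => if n < 0 then x.coeff n else 0, by
    apply x.isPWO_support'.mono
    intro n hn
    simp only [Function.mem_support, ne_eq] at hn ⊢
    intro h
    apply hn
    split <;> simp [h]⟩

instance {Γ R : Type*} [AddCommMonoid Γ] [PartialOrder Γ] [IsOrderedCancelAddMonoid Γ]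
    [NonAssocSemiring R] [CharZero R] : CharZero (HahnSeries Γ R) :=
  (RingHom.charZero_iff HahnSeries.C_injective).mp ‹_›

namespace Polynomial

variable {K : Type*} [Field K]

def antiderivative (p : K[X]) : K[X] :=
  ∑ k ∈ Finset.range (p.natDegree + 1), C (p.coeff k / (k + 1)) * X ^ (k + 1)

theorem derivative_antiderivative [CharZero K] (p : K[X]) : derivative (antiderivative p) = p := by
  conv_rhs => rw [p.as_sum_range' (p.natDegree + 1) p.natDegree.lt_succ_self]
  rw [antiderivative, map_sum]
  refine Finset.sum_congr rfl fun k _ => ?_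
  rw [derivative_C_mul_X_pow, Nat.add_sub_cancel, ← C_mul_X_pow_eq_monomial, Nat.cast_add_one,
    div_mul_cancel₀ _ (Nat.cast_add_one_ne_zero k)]

theorem eval_zero_antiderivative (p : K[X]) : (antiderivative p).eval 0 = 0 := by
  simp [antiderivative, eval_finsetSum]

theorem eval_one_antiderivative (p : K[X]) :
    (antiderivative p).eval 1 = ∑ k ∈ Finset.range (p.natDegree + 1), p.coeff k / (k + 1) := by
  simp [antiderivative, eval_finsetSum]

theorem antiderivative_derivative [CharZero K] (p : K[X]) :
    antiderivative (derivative p) = p - C (p.eval 0) := by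
  set q := antiderivative (derivative p) - (p - C (p.eval 0))
  have hq : derivative q = 0 := by simp [q, derivative_antiderivative]
  have hq0 : q.coeff 0 = 0 := by
    simp [q, coeff_zero_eq_eval_zero, eval_zero_antiderivative]
  suffices q = 0 from sub_eq_zero.mp this
  rw [eq_C_of_derivative_eq_zero hq, hq0, C_0]

end Polynomial

theorem sing_coeff (x : LaurentSeries ℂ) (n : ℤ) :
    (sing x).coeff n = if n < 0 then x.coeff n else 0 := rfl

theorem inQ_sing (x : LaurentSeries ℂ) : inQ (sing x) := fun n hn => by
  simp [sing_coeff, not_lt.mpr hn]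

theorem sing_eq_zero_iff (x : LaurentSeries ℂ) : sing x = 0 ↔ inP x := by
  simp only [HahnSeries.ext_iff, funext_iff, sing_coeff, HahnSeries.coeff_zero, inP]
  exact forall_congr' fun n => by split_ifs with hn <;> simp [hn]

theorem sing_eq_self_of_inQ {x : LaurentSeries ℂ} (h : inQ x) : sing x = x := by
  ext n
  rw [sing_coeff]
  split_ifs with hn
  · rfl
  · exact (h n (not_lt.mp hn)).symm

theorem inP_sub {x y : LaurentSeries ℂ} (hx : inP x) (hy : inP y) : inP (x - y) := fun n hn => by
  simp [HahnSeries.coeff_sub, hx n hn, hy n hn]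

theorem intg_eq_eval_one_antiderivative (F : Polynomial (LaurentSeries ℂ)) :
    intg F = (antiderivative F).eval 1 :=
  (eval_one_antiderivative F).symm

theorem intg_derivative (f : Polynomial (LaurentSeries ℂ)) :
    intg (derivative f) = f.eval 1 - f.eval 0 := by
  simp [intg_eq_eval_one_antiderivative, antiderivative_derivative]

theorem intg_C (a : LaurentSeries ℂ) : intg (C a) = a := by
  simp [intg]

theorem sing_intg_eq_zero_iff (F : Polynomial (LaurentSeries ℂ)) :
    sing (intg F) = 0 ↔
      ∃ f : Polynomial (LaurentSeries ℂ), inP (f.eval 0) ∧ inP (f.eval 1) ∧ F = derivative f := by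
  rw [sing_eq_zero_iff]
  constructor
  · intro h
    refine ⟨antiderivative F, ?_, ?_, (derivative_antiderivative F).symm⟩
    · rw [eval_zero_antiderivative]
      exact fun n _ => rfl
    · rwa [← intg_eq_eval_one_antiderivative]
  · rintro ⟨f, h0, h1, rfl⟩
    rw [intg_derivative]
    exact inP_sub h1 h0

/-- The map `C¹ → z⁻¹ℂ[z⁻¹]`, `F ↦ sing(∫₀¹F)`, takes values in `z⁻¹ℂ[z⁻¹]`, is
surjective onto it, and its kernel is exactly `d(C⁰)`; hence it induces an isomorphism
`H¹(ℂ{{z}}) = C¹/d(C⁰) ≅ z⁻¹ℂ[z⁻¹]`. -/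
theorem raviolo_H1 :
    (∀ F : Polynomial (LaurentSeries ℂ), inQ (sing (intg F)))
    ∧ (∀ q : LaurentSeries ℂ, inQ q → ∃ F : Polynomial (LaurentSeries ℂ),
        sing (intg F) = q)
    ∧ (∀ F : Polynomial (LaurentSeries ℂ),
        sing (intg F) = 0 ↔
        ∃ f : Polynomial (LaurentSeries ℂ),
          inP (f.eval 0) ∧ inP (f.eval 1) ∧ F = derivative f) :=
  ⟨fun F => inQ_sing _,
    fun q hq => ⟨C q, by rw [intg_C, sing_eq_self_of_inQ hq]⟩,
    sing_intg_eq_zero_iff⟩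

end
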